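/- Fix X = 3/2, k_1 = 8, k_2 = 1, δ = 1/6, ξ = 1, k_7 = 8, and let σ, τ be real numbers such that the quantities k_3 = (324 + 4σ + 36τ)/7, β = (132 + 5σ + 24τ)/(11232 + 120σ + 1248τ) and k_4 = (384 + 5σ + 45τ)(1536 + 20σ + 180τ)/(21(1404 + 15σ + 156τ)) are defined and positive (denominators positive). Then for the planar system with these parameters the point (x_1, x_2) = (1, 1/4) is a steady state, and the Jacobian J(1, 1/4) has trace τ and determinant σ. -/

import Mathlib

/-- Right-hand side `F₁` of the reduced two-dimensional model for wild-type Lck. -/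
noncomputable def F1 (k1 k2 k3 k4 k7 β δ ξ X : ℝ) (x1 x2 : ℝ) : ℝ :=
  -(k2 * x1) + k1 * x2 + k4 * ξ * (X - x1 - x2) / (β * (ξ + 1) + ξ * (X - x1 - x2))
    - k3 * x1 * ((X - x1 - x2) + δ * x1)

/-- Right-hand side `F₂` of the reduced two-dimensional model for wild-type Lck. -/
noncomputable def F2 (k1 k2 k3 k4 k7 β δ ξ X : ℝ) (x1 x2 : ℝ) : ℝ :=
  k2 * x1 - k1 * x2 + (k7 / (ξ + 1)) * (X - x1 - x2)

/-- Jacobian matrix of `(F₁, F₂)` with respect to `(x₁, x₂)`, formed from the four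
partial derivatives. -/
noncomputable def Jac (k1 k2 k3 k4 k7 β δ ξ X : ℝ) (x1 x2 : ℝ) : Matrix (Fin 2) (Fin 2) ℝ :=
  !![deriv (fun s => F1 k1 k2 k3 k4 k7 β δ ξ X s x2) x1,
     deriv (fun s => F1 k1 k2 k3 k4 k7 β δ ξ X x1 s) x2;
     deriv (fun s => F2 k1 k2 k3 k4 k7 β δ ξ X s x2) x1,
     deriv (fun s => F2 k1 k2 k3 k4 k7 β δ ξ X x1 s) x2]

/-!
At `(x₁, x₂) = (1, 1/4)` with `X = 3/2` the free amount `X − x₁ − x₂` is `1/4`. With the other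
rates fixed, `F₂` vanishes identically and, writing `m = 32 β k₄ / (8β + 1)²`,
`F₁ = 1 + k₄/(8β + 1) − 5k₃/12`, `tr J = 5k₃/12 − 13 − m`, `det J = 36 + 9m − 2k₃`.
With `N = 132 + 5σ + 24τ` and `D = 1404 + 15σ + 156τ` the family reads `β = N/(8D)` and
`k₄ = (N + D)²/(84 D)`, so `8β + 1 = (N + D)/D`, `k₄/(8β + 1) = (N + D)/84` and `m = N/21`;
the three conditions then become linear identities in `σ` and `τ`.
-/

section Jacobian

variable (k1 k2 k3 k4 k7 β δ ξ X x1 x2 : ℝ)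

lemma hasDerivAt_F1_fst (hD : β * (ξ + 1) + ξ * (X - x1 - x2) ≠ 0) :
    HasDerivAt (fun s => F1 k1 k2 k3 k4 k7 β δ ξ X s x2)
      (-k2 - k4 * ξ * (β * (ξ + 1)) / (β * (ξ + 1) + ξ * (X - x1 - x2)) ^ 2
        - k3 * ((X - x1 - x2) + δ * x1) - k3 * x1 * (δ - 1)) x1 := by
  have hR : HasDerivAt (fun s : ℝ => X - s - x2) (-1) x1 := by
    simpa using ((hasDerivAt_id x1).const_sub X).sub_const x2
  have hlin : HasDerivAt (fun s : ℝ => -(k2 * s) + k1 * x2) (-(k2 * 1)) x1 :=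
    ((hasDerivAt_id x1).const_mul k2).neg.add_const _
  have hquot := (hR.const_mul (k4 * ξ)).div ((hR.const_mul ξ).const_add (β * (ξ + 1))) hD
  have hcub : HasDerivAt (fun s : ℝ => k3 * s * ((X - s - x2) + δ * s))
      (k3 * 1 * ((X - x1 - x2) + δ * x1) + k3 * x1 * (-1 + δ * 1)) x1 :=
    ((hasDerivAt_id x1).const_mul k3).mul (hR.add ((hasDerivAt_id x1).const_mul δ))
  refine ((hlin.add hquot).sub hcub).congr_deriv ?_
  field_simp
  ring

lemma hasDerivAt_F1_snd (hD : β * (ξ + 1) + ξ * (X - x1 - x2) ≠ 0) :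
    HasDerivAt (fun s => F1 k1 k2 k3 k4 k7 β δ ξ X x1 s)
      (k1 - k4 * ξ * (β * (ξ + 1)) / (β * (ξ + 1) + ξ * (X - x1 - x2)) ^ 2 + k3 * x1) x2 := by
  have hR : HasDerivAt (fun s : ℝ => X - x1 - s) (-1) x2 := by
    simpa using (hasDerivAt_id x2).const_sub (X - x1)
  have hlin : HasDerivAt (fun s : ℝ => -(k2 * x1) + k1 * s) (k1 * 1) x2 :=
    ((hasDerivAt_id x2).const_mul k1).const_add _
  have hquot := (hR.const_mul (k4 * ξ)).div ((hR.const_mul ξ).const_add (β * (ξ + 1))) hD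
  have hcub : HasDerivAt (fun s : ℝ => k3 * x1 * ((X - x1 - s) + δ * x1)) (k3 * x1 * (-1)) x2 :=
    (hR.add_const (δ * x1)).const_mul (k3 * x1)
  refine ((hlin.add hquot).sub hcub).congr_deriv ?_
  field_simp
  ring

lemma hasDerivAt_F2_fst :
    HasDerivAt (fun s => F2 k1 k2 k3 k4 k7 β δ ξ X s x2) (k2 - k7 / (ξ + 1)) x1 := by
  have hR : HasDerivAt (fun s : ℝ => X - s - x2) (-1) x1 := by
    simpa using ((hasDerivAt_id x1).const_sub X).sub_const x2
  refine ((((hasDerivAt_id x1).const_mul k2).sub_const (k1 * x2)).add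
    (hR.const_mul (k7 / (ξ + 1)))).congr_deriv ?_
  ring

lemma hasDerivAt_F2_snd :
    HasDerivAt (fun s => F2 k1 k2 k3 k4 k7 β δ ξ X x1 s) (-k1 - k7 / (ξ + 1)) x2 := by
  have hR : HasDerivAt (fun s : ℝ => X - x1 - s) (-1) x2 := by
    simpa using (hasDerivAt_id x2).const_sub (X - x1)
  refine ((((hasDerivAt_id x2).const_mul k1).const_sub (k2 * x1)).add
    (hR.const_mul (k7 / (ξ + 1)))).congr_deriv ?_
  ring

lemma Jac_eq (hD : β * (ξ + 1) + ξ * (X - x1 - x2) ≠ 0) :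
    Jac k1 k2 k3 k4 k7 β δ ξ X x1 x2 =
      !![-k2 - k4 * ξ * (β * (ξ + 1)) / (β * (ξ + 1) + ξ * (X - x1 - x2)) ^ 2
          - k3 * ((X - x1 - x2) + δ * x1) - k3 * x1 * (δ - 1),
        k1 - k4 * ξ * (β * (ξ + 1)) / (β * (ξ + 1) + ξ * (X - x1 - x2)) ^ 2 + k3 * x1;
        k2 - k7 / (ξ + 1), -k1 - k7 / (ξ + 1)] := by
  rw [Jac, (hasDerivAt_F1_fst k1 k2 k3 k4 k7 β δ ξ X x1 x2 hD).deriv,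
    (hasDerivAt_F1_snd k1 k2 k3 k4 k7 β δ ξ X x1 x2 hD).deriv,
    (hasDerivAt_F2_fst k1 k2 k3 k4 k7 β δ ξ X x1 x2).deriv,
    (hasDerivAt_F2_snd k1 k2 k3 k4 k7 β δ ξ X x1 x2).deriv]

end Jacobian

section BasePoint

variable (k3 k4 β : ℝ)

lemma denom_base_eq : β * (1 + 1) + 1 * (3 / 2 - 1 - 1 / 4 : ℝ) = (8 * β + 1) / 4 := by
  ring

lemma F1_base : F1 8 1 k3 k4 8 β (1/6) 1 (3/2) 1 (1/4) = 1 + k4 / (8 * β + 1) - 5 * k3 / 12 := by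
  rw [F1, denom_base_eq, show k4 * 1 * (3 / 2 - 1 - 1 / 4 : ℝ) = k4 / 4 by ring,
    div_div_div_cancel_right₀ four_ne_zero]
  ring

lemma F2_base : F2 8 1 k3 k4 8 β (1/6) 1 (3/2) 1 (1/4) = 0 := by
  norm_num [F2]

lemma trace_Jac_base (hβ : 8 * β + 1 ≠ 0) :
    (Jac 8 1 k3 k4 8 β (1/6) 1 (3/2) 1 (1/4)).trace
      = 5 * k3 / 12 - 13 - 32 * β * k4 / (8 * β + 1) ^ 2 := by
  rw [Jac_eq _ _ _ _ _ _ _ _ _ _ _ (by rw [denom_base_eq]; positivity),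
    Matrix.trace_fin_two_of, denom_base_eq]
  field_simp
  ring

lemma det_Jac_base (hβ : 8 * β + 1 ≠ 0) :
    (Jac 8 1 k3 k4 8 β (1/6) 1 (3/2) 1 (1/4)).det
      = 36 + 9 * (32 * β * k4 / (8 * β + 1) ^ 2) - 2 * k3 := by
  rw [Jac_eq _ _ _ _ _ _ _ _ _ _ _ (by rw [denom_base_eq]; positivity),
    Matrix.det_fin_two_of, denom_base_eq]
  field_simp
  ring

end BasePoint

lemma lck_family_identities (N D : ℝ) (hβ : 0 < N / (8 * D)) :
    (N + D) / 4 * (N + D) / (21 * D) / (8 * (N / (8 * D)) + 1) = (N + D) / 84 ∧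
      32 * (N / (8 * D)) * ((N + D) / 4 * (N + D) / (21 * D)) / (8 * (N / (8 * D)) + 1) ^ 2 = N / 21 := by
  have hD : D ≠ 0 := by
    rintro rfl
    simp at hβ
  have h8 : 8 * (N / (8 * D)) + 1 = (N + D) / D := by
    field_simp
  have hND : N + D ≠ 0 := by
    rintro h
    rw [h, zero_div] at h8
    linarith
  rw [h8]
  constructor <;> field_simp <;> ring

theorem lck_two_parameter_family_general (σ τ : ℝ)
    (hβ : 0 < (132 + 5 * σ + 24 * τ) / (11232 + 120 * σ + 1248 * τ)) :
    F1 8 1 ((324 + 4 * σ + 36 * τ) / 7)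
        ((384 + 5 * σ + 45 * τ) * (1536 + 20 * σ + 180 * τ)
          / (21 * (1404 + 15 * σ + 156 * τ)))
        8 ((132 + 5 * σ + 24 * τ) / (11232 + 120 * σ + 1248 * τ)) (1/6) 1 (3/2) 1 (1/4) = 0 ∧
    F2 8 1 ((324 + 4 * σ + 36 * τ) / 7)
        ((384 + 5 * σ + 45 * τ) * (1536 + 20 * σ + 180 * τ)
          / (21 * (1404 + 15 * σ + 156 * τ)))
        8 ((132 + 5 * σ + 24 * τ) / (11232 + 120 * σ + 1248 * τ)) (1/6) 1 (3/2) 1 (1/4) = 0 ∧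
    Matrix.trace
      (Jac 8 1 ((324 + 4 * σ + 36 * τ) / 7)
        ((384 + 5 * σ + 45 * τ) * (1536 + 20 * σ + 180 * τ)
          / (21 * (1404 + 15 * σ + 156 * τ)))
        8 ((132 + 5 * σ + 24 * τ) / (11232 + 120 * σ + 1248 * τ)) (1/6) 1 (3/2) 1 (1/4)) = τ ∧
    (Jac 8 1 ((324 + 4 * σ + 36 * τ) / 7)
        ((384 + 5 * σ + 45 * τ) * (1536 + 20 * σ + 180 * τ)
          / (21 * (1404 + 15 * σ + 156 * τ)))
        8 ((132 + 5 * σ + 24 * τ) / (11232 + 120 * σ + 1248 * τ)) (1/6) 1 (3/2) 1 (1/4)).det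
      = σ := by
  have hβ_eq : (132 + 5 * σ + 24 * τ) / (11232 + 120 * σ + 1248 * τ)
      = (132 + 5 * σ + 24 * τ) / (8 * (1404 + 15 * σ + 156 * τ)) := by ring
  have hk4_eq : (384 + 5 * σ + 45 * τ) * (1536 + 20 * σ + 180 * τ) / (21 * (1404 + 15 * σ + 156 * τ))
      = ((132 + 5 * σ + 24 * τ) + (1404 + 15 * σ + 156 * τ)) / 4
        * ((132 + 5 * σ + 24 * τ) + (1404 + 15 * σ + 156 * τ)) / (21 * (1404 + 15 * σ + 156 * τ)) := by
    ring
  rw [hβ_eq] at hβ ⊢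
  rw [hk4_eq]
  obtain ⟨hk4, hm⟩ := lck_family_identities _ _ hβ
  have h8 : 8 * ((132 + 5 * σ + 24 * τ) / (8 * (1404 + 15 * σ + 156 * τ))) + 1 ≠ 0 := by
    linarith
  refine ⟨?_, F2_base _ _ _, ?_, ?_⟩
  · rw [F1_base, hk4]
    ring
  · rw [trace_Jac_base _ _ _ h8, hm]
    ring
  · rw [det_Jac_base _ _ _ h8, hm]
    ring

/-- The explicit two-parameter family of steady states extending the Bogdanov–Takens point:
with `X = 3/2`, `k₁ = 8`, `k₂ = 1`, `δ = 1/6`, `ξ = 1`, `k₇ = 8` and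
`k₃ = (324 + 4σ + 36τ)/7`, `β = (132 + 5σ + 24τ)/(11232 + 120σ + 1248τ)`,
`k₄ = (384 + 5σ + 45τ)(1536 + 20σ + 180τ)/(21(1404 + 15σ + 156τ))` (denominators positive
and `k₃, β, k₄` positive), the point `(1, 1/4)` is a steady state and the Jacobian there
has trace `τ` and determinant `σ`. -/
theorem lck_two_parameter_family (σ τ : ℝ)
    (hden1 : 0 < 11232 + 120 * σ + 1248 * τ)
    (hden2 : 0 < 1404 + 15 * σ + 156 * τ)
    (hk3 : 0 < (324 + 4 * σ + 36 * τ) / 7)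
    (hβ : 0 < (132 + 5 * σ + 24 * τ) / (11232 + 120 * σ + 1248 * τ))
    (hk4 : 0 < (384 + 5 * σ + 45 * τ) * (1536 + 20 * σ + 180 * τ)
        / (21 * (1404 + 15 * σ + 156 * τ))) :
    F1 8 1 ((324 + 4 * σ + 36 * τ) / 7)
        ((384 + 5 * σ + 45 * τ) * (1536 + 20 * σ + 180 * τ)
          / (21 * (1404 + 15 * σ + 156 * τ)))
        8 ((132 + 5 * σ + 24 * τ) / (11232 + 120 * σ + 1248 * τ)) (1/6) 1 (3/2) 1 (1/4) = 0 ∧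
    F2 8 1 ((324 + 4 * σ + 36 * τ) / 7)
        ((384 + 5 * σ + 45 * τ) * (1536 + 20 * σ + 180 * τ)
          / (21 * (1404 + 15 * σ + 156 * τ)))
        8 ((132 + 5 * σ + 24 * τ) / (11232 + 120 * σ + 1248 * τ)) (1/6) 1 (3/2) 1 (1/4) = 0 ∧
    Matrix.trace
      (Jac 8 1 ((324 + 4 * σ + 36 * τ) / 7)
        ((384 + 5 * σ + 45 * τ) * (1536 + 20 * σ + 180 * τ)
          / (21 * (1404 + 15 * σ + 156 * τ)))
        8 ((132 + 5 * σ + 24 * τ) / (11232 + 120 * σ + 1248 * τ)) (1/6) 1 (3/2) 1 (1/4)) = τ ∧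
    (Jac 8 1 ((324 + 4 * σ + 36 * τ) / 7)
        ((384 + 5 * σ + 45 * τ) * (1536 + 20 * σ + 180 * τ)
          / (21 * (1404 + 15 * σ + 156 * τ)))
        8 ((132 + 5 * σ + 24 * τ) / (11232 + 120 * σ + 1248 * τ)) (1/6) 1 (3/2) 1 (1/4)).det
      = σ :=
  lck_two_parameter_family_general σ τ hβ
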